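/- arXiv:1207.2142 — 2 statements merged into one kernel-verified Lean document; each statement's English description precedes it below -/
import Mathlib

section
/- For a nontrivial graph G of order n, β(G) + β(Ḡ) = 2n − 1 if and only if G is isomorphic to the complete graph K_n or to its complement, the edgeless graph on n vertices. -/
/-!
Any two distinct vertices are told apart by whichever of them lies in `S`, which is at
distance `0` from itself only; so `V` is always locating, and `V \ {u}` is locating as soon
as `u` has a neighbour. Hence `β(G) ≤ n - 1` whenever `G` has an edge, and if `G` is
neither complete nor edgeless, both `G` and `Ḡ` have an edge and `β(G) + β(Ḡ) ≤ 2n - 2`.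
Conversely, in the edgeless graph no vertex outside `S` is at finite distance from `S`,
so `β = n`; in `K_n` two vertices outside `S` are both at distance `1` from every vertex of
`S`, so `β = n - 1`.
-/

open SimpleGraph

def IsLocatingSet {V : Type*} (G : SimpleGraph V) (S : Set V) : Prop :=
  (∀ v ∉ S, ∃ x ∈ S, G.edist v x ≠ ⊤) ∧
  ∀ u v : V, u ≠ v → ∃ x ∈ S, G.edist u x ≠ G.edist v x

noncomputable def locNum {V : Type*} [Fintype V] (G : SimpleGraph V) : ℕ :=
  sInf {k | ∃ S : Set V, IsLocatingSet G S ∧ S.ncard = k}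

section LocatingSet

variable {V : Type*} {G : SimpleGraph V} {S : Set V}

lemma exists_mem_edist_ne_of_mem {u v : V} (huv : u ≠ v) (hu : u ∈ S) :
    ∃ x ∈ S, G.edist u x ≠ G.edist v x :=
  ⟨u, hu, by rw [edist_self, ne_comm, ne_eq, edist_eq_zero_iff]; exact huv.symm⟩

variable (G) in
lemma isLocatingSet_univ : IsLocatingSet G Set.univ :=
  ⟨fun _ hv => absurd (Set.mem_univ _) hv,
    fun u _ huv => exists_mem_edist_ne_of_mem huv (Set.mem_univ u)⟩

lemma isLocatingSet_compl_singleton_of_adj {u w : V} (h : G.Adj u w) :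
    IsLocatingSet G {u}ᶜ := by
  refine ⟨fun v hv => ?_, fun a b hab => ?_⟩
  · obtain rfl : v = u := by simpa using hv
    exact ⟨w, by simp [h.ne'], edist_ne_top_iff_reachable.mpr h.reachable⟩
  · by_cases ha : a = u
    · subst ha
      obtain ⟨x, hx, hne⟩ := exists_mem_edist_ne_of_mem (G := G) (S := {a}ᶜ) hab.symm
        (by simpa using hab.symm)
      exact ⟨x, hx, hne.symm⟩
    · exact exists_mem_edist_ne_of_mem hab (by simpa using ha)

lemma IsLocatingSet.eq_univ_of_bot (hS : IsLocatingSet (⊥ : SimpleGraph V) S) :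
    S = Set.univ := by
  refine Set.eq_univ_of_forall fun v => by_contra fun hv => ?_
  obtain ⟨x, hx, hne⟩ := hS.1 v hv
  exact hne (edist_bot_of_ne (ne_of_mem_of_not_mem hx hv).symm)

lemma IsLocatingSet.subsingleton_compl_of_top (hS : IsLocatingSet (⊤ : SimpleGraph V) S) :
    Sᶜ.Subsingleton := by
  intro a ha b hb
  by_contra hab
  obtain ⟨x, hx, hne⟩ := hS.2 a b hab
  rw [edist_top_of_ne (ne_of_mem_of_not_mem hx ha).symm,
    edist_top_of_ne (ne_of_mem_of_not_mem hx hb).symm] at hne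
  exact hne rfl

end LocatingSet

section LocationNumber

variable {V : Type*} [Fintype V] {G : SimpleGraph V}

lemma locNum_le_ncard {S : Set V} (hS : IsLocatingSet G S) : locNum G ≤ S.ncard :=
  Nat.sInf_le ⟨S, hS, rfl⟩

lemma le_locNum {k : ℕ} (h : ∀ S, IsLocatingSet G S → k ≤ S.ncard) : k ≤ locNum G :=
  le_csInf ⟨_, Set.univ, isLocatingSet_univ G, rfl⟩ fun _ ⟨S, hS, hk⟩ => hk ▸ h S hS

variable (G) in
lemma locNum_le_card : locNum G ≤ Fintype.card V := by
  simpa using locNum_le_ncard (isLocatingSet_univ G)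

lemma locNum_le_card_sub_one_of_adj {u w : V} (h : G.Adj u w) :
    locNum G ≤ Fintype.card V - 1 := by
  classical
  simpa [Set.ncard_eq_toFinset_card', Finset.card_compl] using
    locNum_le_ncard (isLocatingSet_compl_singleton_of_adj h)

lemma locNum_bot : locNum (⊥ : SimpleGraph V) = Fintype.card V :=
  (locNum_le_card _).antisymm <| le_locNum fun _ hS => by simp [hS.eq_univ_of_bot]

lemma locNum_top (hn : 2 ≤ Fintype.card V) :
    locNum (⊤ : SimpleGraph V) = Fintype.card V - 1 := by
  obtain ⟨u, w, huw⟩ := Fintype.exists_pair_of_one_lt_card hn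
  refine (locNum_le_card_sub_one_of_adj ((top_adj u w).mpr huw)).antisymm <|
    le_locNum fun S hS => ?_
  have hcompl : Sᶜ.ncard ≤ 1 := Set.ncard_le_one_iff_subsingleton.mpr hS.subsingleton_compl_of_top
  have hsum : S.ncard + Sᶜ.ncard = Fintype.card V := by
    rw [Set.ncard_add_ncard_compl, Nat.card_eq_fintype_card]
  omega

lemma locNum_add_locNum_compl_le_of_ne_top_of_ne_bot (htop : G ≠ ⊤) (hbot : G ≠ ⊥) :
    locNum G + locNum Gᶜ ≤ 2 * Fintype.card V - 2 := by
  obtain ⟨u, w, h⟩ := ne_bot_iff_exists_adj.mp hbot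
  obtain ⟨u', w', h'⟩ := ne_bot_iff_exists_adj.mp (compl_eq_bot.not.mpr htop)
  have := locNum_le_card_sub_one_of_adj h
  have := locNum_le_card_sub_one_of_adj h'
  omega

end LocationNumber

section Isomorphism

variable {V W : Type*} {G : SimpleGraph V}

lemma nonempty_iso_top_iff (e : V ≃ W) : Nonempty (G ≃g (⊤ : SimpleGraph W)) ↔ G = ⊤ := by
  refine ⟨fun ⟨f⟩ => ?_, fun h => h ▸ ⟨⟨e, by simp⟩⟩⟩
  ext u v
  rw [← f.map_adj_iff, top_adj, top_adj, f.injective.ne_iff]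

lemma nonempty_iso_bot_iff (e : V ≃ W) : Nonempty (G ≃g (⊥ : SimpleGraph W)) ↔ G = ⊥ := by
  refine ⟨fun ⟨f⟩ => ?_, fun h => h ▸ ⟨⟨e, by simp⟩⟩⟩
  ext u v
  rw [← f.map_adj_iff]
  simp

end Isomorphism

/-- For a nontrivial graph `G` of order `n`, `β(G) + β(Ḡ) = 2n - 1` iff `G` is complete
or edgeless. -/
theorem locNum_sum_eq_max_iff {V : Type*} [Fintype V] (G : SimpleGraph V)
    (hn : 2 ≤ Fintype.card V) :
    locNum G + locNum Gᶜ = 2 * Fintype.card V - 1 ↔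
      Nonempty (G ≃g (⊤ : SimpleGraph (Fin (Fintype.card V)))) ∨
      Nonempty (G ≃g (⊥ : SimpleGraph (Fin (Fintype.card V)))) := by
  rw [nonempty_iso_top_iff (Fintype.equivFin V), nonempty_iso_bot_iff (Fintype.equivFin V)]
  constructor
  · intro h
    by_contra! hG
    have := locNum_add_locNum_compl_le_of_ne_top_of_ne_bot hG.1 hG.2
    omega
  · rintro (rfl | rfl)
    · rw [compl_top, locNum_top hn, locNum_bot]
      omega
    · rw [compl_bot, locNum_top hn, locNum_bot]
      omega
end

section
/- For a doubly-connected graph G of order n ≥ 5, λ(G) + λ(Ḡ) = 4 if and only if G is isomorphic to one of the following graphs on 5 vertices: the path P5, the cycle C5, the bull graph B, or the house graph H. -/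
open SimpleGraph

/-- `D` is a locating-dominating set (LD-set) of `G`: for every two distinct vertices
`u, v ∉ D`, the sets `N(u) ∩ D` and `N(v) ∩ D` are nonempty and distinct. -/
def IsLDSet {V : Type*} (G : SimpleGraph V) (D : Set V) : Prop :=
  ∀ u ∉ D, ∀ v ∉ D, u ≠ v →
    (G.neighborSet u ∩ D).Nonempty ∧ (G.neighborSet v ∩ D).Nonempty ∧
    G.neighborSet u ∩ D ≠ G.neighborSet v ∩ D

/-- The location-domination number `λ(G)`: the minimum cardinality of an LD-set. -/
noncomputable def ldNum {V : Type*} [Fintype V] (G : SimpleGraph V) : ℕ :=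
  sInf {k | ∃ D : Set V, IsLDSet G D ∧ D.ncard = k}

/-- The bull graph: a triangle `0, 1, 2` with pendant vertices `3` (attached at `0`)
and `4` (attached at `1`). -/
def bullGraph : SimpleGraph (Fin 5) :=
  SimpleGraph.fromEdgeSet {s(0, 1), s(0, 2), s(1, 2), s(0, 3), s(1, 4)}

/-! ### Basic facts about `ldNum` -/

section Basic
variable {V : Type*} [Fintype V] {G : SimpleGraph V}

omit [Fintype V] in
lemma isLDSet_univ (G : SimpleGraph V) : IsLDSet G Set.univ := by
  intro u hu
  exact absurd (Set.mem_univ u) hu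

lemma ldNum_set_nonempty (G : SimpleGraph V) :
    {k | ∃ D : Set V, IsLDSet G D ∧ D.ncard = k}.Nonempty :=
  ⟨_, Set.univ, isLDSet_univ G, rfl⟩

lemma exists_ldSet_ncard_eq (G : SimpleGraph V) :
    ∃ D : Set V, IsLDSet G D ∧ D.ncard = ldNum G :=
  Nat.sInf_mem (ldNum_set_nonempty G)

lemma card_add_compl (D : Set V) : D.ncard + Dᶜ.ncard = Fintype.card V := by
  rw [Set.ncard_add_ncard_compl, Nat.card_eq_fintype_card]

lemma two_le_ncard_of_isLDSet (h3 : 3 ≤ Fintype.card V) {D : Set V}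
    (hD : IsLDSet G D) : 2 ≤ D.ncard := by
  by_contra h
  push_neg at h
  have hc : 2 ≤ Dᶜ.ncard := by
    have := card_add_compl D
    omega
  obtain ⟨u, hu, v, hv, huv⟩ := (Set.one_lt_ncard (s := Dᶜ) (Set.toFinite _)).mp (by omega)
  obtain ⟨⟨a, ha, haD⟩, ⟨b, hb, hbD⟩, hne⟩ := hD u hu v hv huv
  interval_cases hD2 : D.ncard
  · rw [Set.ncard_eq_zero (Set.toFinite _)] at hD2
    rw [hD2] at haD
    exact haD
  · obtain ⟨d, rfl⟩ := (Set.ncard_eq_one).mp hD2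
    apply hne
    have h1 : G.neighborSet u ∩ {d} = {d} := by
      apply Set.eq_singleton_iff_nonempty_unique_mem.mpr
      exact ⟨⟨a, ha, haD⟩, fun x hx => hx.2⟩
    have h2 : G.neighborSet v ∩ {d} = {d} := by
      apply Set.eq_singleton_iff_nonempty_unique_mem.mpr
      exact ⟨⟨b, hb, hbD⟩, fun x hx => hx.2⟩
    rw [h1, h2]

lemma two_le_ldNum (h3 : 3 ≤ Fintype.card V) (G : SimpleGraph V) : 2 ≤ ldNum G := by
  obtain ⟨D, hD, hcard⟩ := exists_ldSet_ncard_eq G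
  rw [← hcard]
  exact two_le_ncard_of_isLDSet h3 hD

lemma card_le_five_of_isLDSet {D : Set V} (hD : IsLDSet G D) (h2 : D.ncard = 2) :
    Fintype.card V ≤ 5 := by
  obtain ⟨x, y, hxy, rfl⟩ := Set.ncard_eq_two.mp h2
  have hcompl : ({x, y}ᶜ : Set V).ncard ≤ 3 := by
    by_contra hgt
    push_neg at hgt
    have hex : ∀ u ∈ ({x, y}ᶜ : Set V), ∃ v ∈ ({x, y}ᶜ : Set V), v ≠ u := by
      intro u hu
      obtain ⟨v, hv, hvu⟩ :=
        Set.exists_ne_of_one_lt_ncard (s := ({x, y}ᶜ : Set V)) (by omega) u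
      exact ⟨v, hv, hvu⟩
    set t : Set (Set V) := {{x}, {y}, {x, y}} with ht
    have hmaps : ∀ u ∈ ({x, y}ᶜ : Set V), G.neighborSet u ∩ {x, y} ∈ t := by
      intro u hu
      obtain ⟨v, hv, hvu⟩ := hex u hu
      obtain ⟨⟨a, ha, haD⟩, -, -⟩ := hD u hu v hv (Ne.symm hvu)
      by_cases hx : G.Adj u x <;> by_cases hy : G.Adj u y
      · right; right
        ext z
        simp only [Set.mem_inter_iff, mem_neighborSet, Set.mem_insert_iff,
          Set.mem_singleton_iff]
        constructor
        · rintro ⟨_, h⟩; exact h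
        · rintro (rfl | rfl)
          · exact ⟨hx, Or.inl rfl⟩
          · exact ⟨hy, Or.inr rfl⟩
      · left
        ext z
        simp only [Set.mem_inter_iff, mem_neighborSet, Set.mem_insert_iff,
          Set.mem_singleton_iff]
        constructor
        · rintro ⟨hz, rfl | rfl⟩
          · rfl
          · exact absurd hz hy
        · rintro rfl; exact ⟨hx, Or.inl rfl⟩
      · right; left
        ext z
        simp only [Set.mem_inter_iff, mem_neighborSet, Set.mem_insert_iff,
          Set.mem_singleton_iff]
        constructor
        · rintro ⟨hz, rfl | rfl⟩
          · exact absurd hz hx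
          · rfl
        · rintro rfl; exact ⟨hy, Or.inr rfl⟩
      · exfalso
        rcases haD with rfl | rfl
        · exact hx ha
        · exact hy ha
    have hinj : Set.InjOn (fun u => G.neighborSet u ∩ {x, y}) ({x, y}ᶜ : Set V) := by
      intro u hu v hv heq
      by_contra hne
      exact (hD u hu v hv hne).2.2 heq
    have hle := Set.ncard_le_ncard_of_injOn _ hmaps hinj
      (((Set.finite_singleton _).insert _).insert _)
    have ht3 : t.ncard ≤ 3 := by
      refine le_trans (Set.ncard_insert_le _ _) ?_
      have := Set.ncard_insert_le ({y} : Set V) ({({x, y} : Set V)} : Set (Set V))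
      have := Set.ncard_singleton ({x, y} : Set V)
      omega
    omega
  have := card_add_compl ({x, y} : Set V)
  omega

end Basic

/-! ### Invariance of `ldNum` under isomorphism -/

section IsoInv
variable {V W : Type*} {G : SimpleGraph V} {H : SimpleGraph W}

lemma neighborSet_image (e : G ≃g H) (w : W) (D : Set V) :
    H.neighborSet w ∩ (⇑e '' D) = ⇑e '' (G.neighborSet (e.symm w) ∩ D) := by
  ext z
  simp only [Set.mem_inter_iff, mem_neighborSet, Set.mem_image]
  constructor
  · rintro ⟨hadj, d, hd, rfl⟩
    refine ⟨d, ⟨?_, hd⟩, rfl⟩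
    have := (e.symm.map_adj_iff (v := w) (w := e d)).mpr hadj
    rwa [e.symm_apply_apply] at this
  · rintro ⟨d, ⟨hadj, hd⟩, rfl⟩
    refine ⟨?_, d, hd, rfl⟩
    have := (e.symm.map_adj_iff (v := w) (w := e d)).mp ?_
    · exact this
    · rwa [e.symm_apply_apply]

lemma IsLDSet.image (e : G ≃g H) {D : Set V} (hD : IsLDSet G D) :
    IsLDSet H (⇑e '' D) := by
  intro u hu v hv huv
  have hu' : e.symm u ∉ D := by
    intro h
    exact hu ⟨e.symm u, h, e.apply_symm_apply u⟩
  have hv' : e.symm v ∉ D := by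
    intro h
    exact hv ⟨e.symm v, h, e.apply_symm_apply v⟩
  have huv' : e.symm u ≠ e.symm v := fun h => huv (by
    have := congrArg e h
    rwa [e.apply_symm_apply, e.apply_symm_apply] at this)
  obtain ⟨h1, h2, h3⟩ := hD _ hu' _ hv' huv'
  rw [neighborSet_image e u D, neighborSet_image e v D]
  refine ⟨h1.image _, h2.image _, ?_⟩
  intro h
  exact h3 ((Set.image_injective.mpr e.injective) h)

lemma ldNum_le_of_iso [Fintype V] [Fintype W] (e : G ≃g H) : ldNum H ≤ ldNum G := by
  obtain ⟨D, hD, hcard⟩ := exists_ldSet_ncard_eq G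
  exact Nat.sInf_le ⟨⇑e '' D, hD.image e, by
    rw [Set.ncard_image_of_injective _ e.injective]; exact hcard⟩

lemma ldNum_congr [Fintype V] [Fintype W] (e : G ≃g H) : ldNum G = ldNum H :=
  le_antisymm (ldNum_le_of_iso e.symm) (ldNum_le_of_iso e)

/-- An isomorphism of graphs induces an isomorphism of the complements. -/
def isoCompl (e : G ≃g H) : Gᶜ ≃g Hᶜ where
  toEquiv := e.toEquiv
  map_rel_iff' := by
    intro a b
    show Hᶜ.Adj (e a) (e b) ↔ Gᶜ.Adj a b
    simp only [compl_adj, e.map_adj_iff, ne_eq, EmbeddingLike.apply_eq_iff_eq]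

end IsoInv

/-! ### Concrete machinery on `Fin 5` -/

/-- index of the unordered pair `{i,j}` among the ten pairs of elements of `Fin 5` -/
def pIdx : Fin 5 → Fin 5 → Fin 10 :=
  ![![0, 0, 1, 2, 3], ![0, 0, 4, 5, 6], ![1, 4, 0, 7, 8], ![2, 5, 7, 0, 9], ![3, 6, 8, 9, 0]]

def pFst : Fin 10 → Fin 5 := ![0, 0, 0, 0, 1, 1, 1, 2, 2, 3]
def pSnd : Fin 10 → Fin 5 := ![1, 2, 3, 4, 2, 3, 4, 3, 4, 4]

/-- The graph on `Fin 5` whose edges are given by the bit-vector `b`. -/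
def graphOf (b : Fin 10 → Bool) : SimpleGraph (Fin 5) :=
  SimpleGraph.fromRel fun i j => b (pIdx i j) = true

instance (b : Fin 10 → Bool) : DecidableRel (graphOf b).Adj := fun i j =>
  decidable_of_iff _ (SimpleGraph.fromRel_adj _ i j).symm

lemma pIdx_symm : ∀ i j : Fin 5, pIdx i j = pIdx j i := by decide

lemma pIdx_fst_snd : ∀ i j : Fin 5, i ≠ j →
    (pFst (pIdx i j) = i ∧ pSnd (pIdx i j) = j) ∨
    (pFst (pIdx i j) = j ∧ pSnd (pIdx i j) = i) := by decide

lemma graphOf_adj (b : Fin 10 → Bool) {i j : Fin 5} (h : i ≠ j) :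
    (graphOf b).Adj i j ↔ b (pIdx i j) = true := by
  show (SimpleGraph.fromRel _).Adj i j ↔ _
  rw [SimpleGraph.fromRel_adj, pIdx_symm j i, or_self]
  simp [h]

/-- Transfer a graph on an abstract 5-element vertex type to a `graphOf` via any
equivalence. -/
lemma iso_graphOf {V : Type*} (G : SimpleGraph V) (e : V ≃ Fin 5) :
    ∃ (b : Fin 10 → Bool) (φ : G ≃g graphOf b), ∀ v, φ v = e v := by
  classical
  refine ⟨fun k => decide (G.Adj (e.symm (pFst k)) (e.symm (pSnd k))), ⟨e, ?_⟩, fun v => rfl⟩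
  intro a c
  show (graphOf _).Adj (e a) (e c) ↔ G.Adj a c
  by_cases hac : a = c
  · subst hac
    simp
  · have h1 : e a ≠ e c := fun h => hac (e.injective h)
    rw [graphOf_adj _ h1]
    rcases pIdx_fst_snd _ _ h1 with ⟨h2, h3⟩ | ⟨h2, h3⟩ <;> rw [h2, h3] <;>
      simp only [Equiv.symm_apply_apply, decide_eq_true_eq]
    exact G.adj_comm c a

/-! ### The LD condition for a fixed pair, decidably -/

/-- `{x, y}` is a locating-dominating set, phrased elementwise. -/
def ldxP (G : SimpleGraph (Fin 5)) (x y : Fin 5) : Prop :=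
  ∀ u, u ≠ x → u ≠ y → ((G.Adj u x ∨ G.Adj u y) ∧
    ∀ v, v ≠ x → v ≠ y → u ≠ v →
      ¬((G.Adj u x ↔ G.Adj v x) ∧ (G.Adj u y ↔ G.Adj v y)))

instance (G : SimpleGraph (Fin 5)) [DecidableRel G.Adj] (x y : Fin 5) :
    Decidable (ldxP G x y) := by unfold ldxP; infer_instance

def hasLD2 (G : SimpleGraph (Fin 5)) : Prop := ∃ x y : Fin 5, x ≠ y ∧ ldxP G x y

instance (G : SimpleGraph (Fin 5)) [DecidableRel G.Adj] : Decidable (hasLD2 G) := by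
  unfold hasLD2; infer_instance

lemma exists_fourth : ∀ u x y : Fin 5, ∃ v : Fin 5, v ≠ u ∧ v ≠ x ∧ v ≠ y := by decide

lemma isLDSet_pair (G : SimpleGraph (Fin 5)) {x y : Fin 5} (hxy : x ≠ y) :
    IsLDSet G {x, y} ↔ ldxP G x y := by
  have hmem : ∀ u z : Fin 5, z ∈ G.neighborSet u ∩ ({x, y} : Set (Fin 5)) ↔
      (G.Adj u z ∧ (z = x ∨ z = y)) := by
    intro u z
    simp [Set.mem_insert_iff]
  have hne : ∀ u, (G.neighborSet u ∩ ({x, y} : Set (Fin 5))).Nonempty ↔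
      (G.Adj u x ∨ G.Adj u y) := by
    intro u
    constructor
    · rintro ⟨z, hz⟩
      rcases (hmem u z).mp hz with ⟨ha, rfl | rfl⟩
      · exact Or.inl ha
      · exact Or.inr ha
    · rintro (h | h)
      · exact ⟨x, (hmem u x).mpr ⟨h, Or.inl rfl⟩⟩
      · exact ⟨y, (hmem u y).mpr ⟨h, Or.inr rfl⟩⟩
  have heq : ∀ u v, (G.neighborSet u ∩ ({x, y} : Set (Fin 5)) =
      G.neighborSet v ∩ ({x, y} : Set (Fin 5))) ↔
      ((G.Adj u x ↔ G.Adj v x) ∧ (G.Adj u y ↔ G.Adj v y)) := by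
    intro u v
    constructor
    · intro h
      constructor
      · have := Set.ext_iff.mp h x
        rw [hmem, hmem] at this
        simpa using this
      · have := Set.ext_iff.mp h y
        rw [hmem, hmem] at this
        simpa [hxy.symm] using this
    · rintro ⟨h1, h2⟩
      ext z
      rw [hmem, hmem]
      by_cases hzx : z = x
      · subst hzx; simp [h1]
      · by_cases hzy : z = y
        · subst hzy; simp [h2]
        · simp [hzx, hzy]
  constructor
  · intro hLD u hux huy
    have hu : u ∉ ({x, y} : Set (Fin 5)) := by simp [hux, huy]
    obtain ⟨v, hvu, hvx, hvy⟩ := exists_fourth u x y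
    constructor
    · have := hLD u hu v (by simp [hvx, hvy]) hvu.symm
      exact (hne u).mp this.1
    · intro v' hv'x hv'y huv' hc
      have := hLD u hu v' (by simp [hv'x, hv'y]) huv'
      exact this.2.2 ((heq u v').mpr hc)
  · intro h u hu v hv huv
    simp only [Set.mem_insert_iff, Set.mem_singleton_iff, not_or] at hu hv
    obtain ⟨hdomu, hdist⟩ := h u hu.1 hu.2
    obtain ⟨hdomv, -⟩ := h v hv.1 hv.2
    refine ⟨(hne u).mpr hdomu, (hne v).mpr hdomv, ?_⟩
    intro hEq
    exact hdist v hv.1 hv.2 huv ((heq u v).mp hEq)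

lemma hasLD2_iff (G : SimpleGraph (Fin 5)) :
    hasLD2 G ↔ ∃ D : Set (Fin 5), IsLDSet G D ∧ D.ncard = 2 := by
  constructor
  · rintro ⟨x, y, hxy, h⟩
    exact ⟨{x, y}, (isLDSet_pair G hxy).mpr h, Set.ncard_pair hxy⟩
  · rintro ⟨D, hD, h2⟩
    obtain ⟨x, y, hxy, rfl⟩ := Set.ncard_eq_two.mp h2
    exact ⟨x, y, hxy, (isLDSet_pair G hxy).mp hD⟩

lemma ldNum_eq_two_iff_fin5 (G : SimpleGraph (Fin 5)) : ldNum G = 2 ↔ hasLD2 G := by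
  rw [hasLD2_iff]
  constructor
  · intro h
    obtain ⟨D, hD, hc⟩ := exists_ldSet_ncard_eq G
    exact ⟨D, hD, by rw [hc, h]⟩
  · rintro ⟨D, hD, h2⟩
    refine le_antisymm (Nat.sInf_le ⟨D, hD, h2⟩) ?_
    exact two_le_ldNum (by rw [Fintype.card_fin]; omega) G

/-! ### Decidability for the four target graphs -/

instance : DecidableRel (pathGraph 5).Adj := fun u v =>
  decidable_of_iff _ pathGraph_adj.symm

instance : DecidableRel bullGraph.Adj := fun v w =>
  decidable_of_iff ((s(v, w) = s(0, 1) ∨ s(v, w) = s(0, 2) ∨ s(v, w) = s(1, 2) ∨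
    s(v, w) = s(0, 3) ∨ s(v, w) = s(1, 4)) ∧ v ≠ w) (by
      rw [bullGraph, SimpleGraph.fromEdgeSet_adj]
      simp [Set.mem_insert_iff])

/-! ### The key finite check -/

def isoToTargets (b : Fin 10 → Bool) : Prop :=
  (∃ e : Equiv.Perm (Fin 5), ∀ i j, (graphOf b).Adj i j ↔ (pathGraph 5).Adj (e i) (e j)) ∨
  (∃ e : Equiv.Perm (Fin 5), ∀ i j, (graphOf b).Adj i j ↔ (cycleGraph 5).Adj (e i) (e j)) ∨
  (∃ e : Equiv.Perm (Fin 5), ∀ i j, (graphOf b).Adj i j ↔ bullGraph.Adj (e i) (e j)) ∨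
  (∃ e : Equiv.Perm (Fin 5), ∀ i j, (graphOf b).Adj i j ↔ (pathGraph 5)ᶜ.Adj (e i) (e j))

noncomputable instance (b : Fin 10 → Bool) : Decidable (isoToTargets b) := by
  unfold isoToTargets; infer_instance

set_option maxRecDepth 100000 in
set_option maxHeartbeats 12000000 in
lemma key : ∀ b0 b1 b2 b3 b4 b5 b6 b7 b8 b9 : Bool,
    ldxP (graphOf ![b0, b1, b2, b3, b4, b5, b6, b7, b8, b9]) 3 4 →
    hasLD2 (graphOf ![b0, b1, b2, b3, b4, b5, b6, b7, b8, b9])ᶜ →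
    isoToTargets ![b0, b1, b2, b3, b4, b5, b6, b7, b8, b9] := by
  decide

/-! ### LD numbers of the four target graphs and their complements -/

lemma ldNum_pathGraph : ldNum (pathGraph 5) = 2 :=
  (ldNum_eq_two_iff_fin5 _).mpr (by decide)

lemma ldNum_pathGraph_compl : ldNum (pathGraph 5)ᶜ = 2 :=
  (ldNum_eq_two_iff_fin5 _).mpr (by decide)

lemma ldNum_cycleGraph : ldNum (cycleGraph 5) = 2 :=
  (ldNum_eq_two_iff_fin5 _).mpr (by decide)

lemma ldNum_cycleGraph_compl : ldNum (cycleGraph 5)ᶜ = 2 :=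
  (ldNum_eq_two_iff_fin5 _).mpr (by decide)

lemma ldNum_bullGraph : ldNum bullGraph = 2 :=
  (ldNum_eq_two_iff_fin5 _).mpr (by decide)

lemma ldNum_bullGraph_compl : ldNum bullGraphᶜ = 2 :=
  (ldNum_eq_two_iff_fin5 _).mpr (by decide)

/-! ### Auxiliary: an equivalence sending a chosen pair to `3, 4` -/

lemma exists_equiv_fin5 {V : Type*} [Fintype V] (h5 : Fintype.card V = 5)
    {x y : V} (hxy : x ≠ y) : ∃ e : V ≃ Fin 5, e x = 3 ∧ e y = 4 := by
  classical
  let e0 : V ≃ Fin 5 := Fintype.equivFinOfCardEq h5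
  let σ1 : Equiv.Perm (Fin 5) := Equiv.swap (e0 x) 3
  have h1x : σ1 (e0 x) = 3 := Equiv.swap_apply_left _ _
  have ha3 : σ1 (e0 y) ≠ 3 := by
    intro h
    rw [← h1x] at h
    exact hxy (e0.injective (σ1.injective h)).symm
  let σ2 : Equiv.Perm (Fin 5) := Equiv.swap (σ1 (e0 y)) 4
  refine ⟨(e0.trans σ1).trans σ2, ?_, ?_⟩
  · show σ2 (σ1 (e0 x)) = 3
    rw [h1x]
    exact Equiv.swap_apply_of_ne_of_ne (Ne.symm ha3) (by decide)
  · exact Equiv.swap_apply_left _ _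

/-- For a doubly-connected graph `G` of order `n ≥ 5`, `λ(G) + λ(Ḡ) = 4` iff `G` is
isomorphic to the path `P₅`, the cycle `C₅`, the bull graph `B`, or the house graph
`H = P̄₅`. -/
theorem ldNum_sum_eq_four_iff_doubly_connected {V : Type*} [Fintype V]
    (G : SimpleGraph V) (hn : 5 ≤ Fintype.card V) (hG : G.Connected)
    (hGc : Gᶜ.Connected) :
    ldNum G + ldNum Gᶜ = 4 ↔
      Nonempty (G ≃g pathGraph 5) ∨
      Nonempty (G ≃g cycleGraph 5) ∨
      Nonempty (G ≃g bullGraph) ∨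
      Nonempty (G ≃g (pathGraph 5)ᶜ) := by
  constructor
  · intro hsum
    have h3 : 3 ≤ Fintype.card V := by omega
    have hg2 := two_le_ldNum h3 G
    have hgc2 := two_le_ldNum h3 Gᶜ
    have hG2 : ldNum G = 2 := by omega
    have hGc2 : ldNum Gᶜ = 2 := by omega
    obtain ⟨D, hD, hDcard⟩ := exists_ldSet_ncard_eq G
    rw [hG2] at hDcard
    have h5 : Fintype.card V = 5 := le_antisymm (card_le_five_of_isLDSet hD hDcard) hn
    obtain ⟨x, y, hxy, rfl⟩ := Set.ncard_eq_two.mp hDcard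
    obtain ⟨e, hex, hey⟩ := exists_equiv_fin5 h5 hxy
    obtain ⟨b, φ, hφ⟩ := iso_graphOf G e
    -- the LD pair transfers to {3, 4}
    have himg : IsLDSet (graphOf b) (⇑φ '' {x, y}) := hD.image φ
    have himg' : (⇑φ '' {x, y} : Set (Fin 5)) = {3, 4} := by
      rw [Set.image_pair, hφ x, hφ y, hex, hey]
    rw [himg'] at himg
    have hldx : ldxP (graphOf b) 3 4 := (isLDSet_pair _ (by decide)).mp himg
    -- the complement has a 2-element LD set
    have hcompl : hasLD2 (graphOf b)ᶜ := by
      rw [← ldNum_eq_two_iff_fin5]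
      rw [← ldNum_congr (isoCompl φ)]
      exact hGc2
    -- write b in expanded form and apply the finite check
    have hb : ![b 0, b 1, b 2, b 3, b 4, b 5, b 6, b 7, b 8, b 9] = b := by
      funext k
      fin_cases k <;> rfl
    have hkey := key (b 0) (b 1) (b 2) (b 3) (b 4) (b 5) (b 6) (b 7) (b 8) (b 9)
      (by rwa [hb]) (by rwa [hb])
    rw [hb] at hkey
    unfold isoToTargets at hkey
    rcases hkey with ⟨σ, hσ⟩ | ⟨σ, hσ⟩ | ⟨σ, hσ⟩ | ⟨σ, hσ⟩
    · exact Or.inl ⟨φ.trans ⟨σ, fun {i j} => (hσ i j).symm⟩⟩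
    · exact Or.inr (Or.inl ⟨φ.trans ⟨σ, fun {i j} => (hσ i j).symm⟩⟩)
    · exact Or.inr (Or.inr (Or.inl ⟨φ.trans ⟨σ, fun {i j} => (hσ i j).symm⟩⟩))
    · exact Or.inr (Or.inr (Or.inr ⟨φ.trans ⟨σ, fun {i j} => (hσ i j).symm⟩⟩))
  · intro h
    rcases h with h1 | h2 | h3 | h4
    · obtain ⟨ψ⟩ := h1
      rw [ldNum_congr ψ, ldNum_congr (isoCompl ψ), ldNum_pathGraph, ldNum_pathGraph_compl]
    · obtain ⟨ψ⟩ := h2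
      rw [ldNum_congr ψ, ldNum_congr (isoCompl ψ), ldNum_cycleGraph, ldNum_cycleGraph_compl]
    · obtain ⟨ψ⟩ := h3
      rw [ldNum_congr ψ, ldNum_congr (isoCompl ψ), ldNum_bullGraph, ldNum_bullGraph_compl]
    · obtain ⟨ψ⟩ := h4
      rw [ldNum_congr ψ, ldNum_congr (isoCompl ψ), ldNum_pathGraph_compl, compl_compl,
        ldNum_pathGraph]
end
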